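/- Let ε₁, ε₂ ∈ {+,−} be two signs. For every 3-element triangle-free set S₁ ⊆ GF(9) and every b ∈ GF(9), there exists a 3-element triangle-free set S₂ ⊆ GF(9) such that every s₂ ∈ S₂ satisfies: the edge {s₂, b} in SP_9 has sign ε₂, and there exists s₁ ∈ S₁ such that the edge {s₁, s₂} has sign ε₁. -/
import Mathlib

open Polynomial

/-- GF(9) constructed as GF(3)[x]/(x²+1). -/
abbrev F9 : Type := AdjoinRoot (X ^ 2 + 1 : (ZMod 3)[X])

/-- The class of the polynomial x. -/
noncomputable def ξ : F9 := AdjoinRoot.root _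

/-- `a` is a nonzero square in GF(9). -/
def Sq (a : F9) : Prop := a ≠ 0 ∧ ∃ b : F9, b ^ 2 = a

/-- ε-neighborhood of a vertex in SP₉ (ε = true means positive). -/
def Nb (ε : Bool) (v : F9) : Set F9 :=
  {u | u ≠ v ∧ (if ε then Sq (u - v) else ¬ Sq (u - v))}

/-- A set of vertices of SP₉ is (signed) triangle-free. -/
def TriFree (S : Set F9) : Prop :=
  (¬ ∃ a b c, a ∈ S ∧ b ∈ S ∧ c ∈ S ∧ a ≠ b ∧ a ≠ c ∧ b ≠ c ∧
      Sq (a - b) ∧ Sq (b - c) ∧ Sq (a - c)) ∧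
  (¬ ∃ a b c, a ∈ S ∧ b ∈ S ∧ c ∈ S ∧ a ≠ b ∧ a ≠ c ∧ b ≠ c ∧
      ¬ Sq (a - b) ∧ ¬ Sq (b - c) ∧ ¬ Sq (a - c))

/-! ### A concrete model of GF(9) -/

structure FF where
  re : ZMod 3
  im : ZMod 3
deriving DecidableEq, Fintype

namespace FF

instance : Zero FF := ⟨⟨0,0⟩⟩
instance : One FF := ⟨⟨1,0⟩⟩
instance : Add FF := ⟨fun x y => ⟨x.re + y.re, x.im + y.im⟩⟩
instance : Neg FF := ⟨fun x => ⟨-x.re, -x.im⟩⟩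
instance : Mul FF := ⟨fun x y => ⟨x.re*y.re - x.im*y.im, x.re*y.im + x.im*y.re⟩⟩

protected lemma hadd_assoc : ∀ a b c : FF, a + b + c = a + (b + c) := by decide
protected lemma hzero_add : ∀ a : FF, 0 + a = a := by decide
protected lemma hadd_zero : ∀ a : FF, a + 0 = a := by decide
protected lemma hadd_comm : ∀ a b : FF, a + b = b + a := by decide
protected lemma hneg_add : ∀ a : FF, -a + a = 0 := by decide
protected lemma hmul_assoc : ∀ a b c : FF, a * b * c = a * (b * c) := by decide
protected lemma hone_mul : ∀ a : FF, 1 * a = a := by decide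
protected lemma hmul_one : ∀ a : FF, a * 1 = a := by decide
protected lemma hleft : ∀ a b c : FF, a * (b + c) = a * b + a * c := by decide
protected lemma hright : ∀ a b c : FF, (a + b) * c = a * c + b * c := by decide
protected lemma hzero_mul : ∀ a : FF, 0 * a = 0 := by decide
protected lemma hmul_zero : ∀ a : FF, a * 0 = 0 := by decide
protected lemma hmul_comm : ∀ a b : FF, a * b = b * a := by decide

instance : CommRing FF where
  add_assoc := FF.hadd_assoc
  zero_add := FF.hzero_add
  add_zero := FF.hadd_zero
  add_comm := FF.hadd_comm
  neg_add_cancel := FF.hneg_add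
  nsmul := nsmulRec
  zsmul := zsmulRec
  mul_assoc := FF.hmul_assoc
  one_mul := FF.hone_mul
  mul_one := FF.hmul_one
  left_distrib := FF.hleft
  right_distrib := FF.hright
  zero_mul := FF.hzero_mul
  mul_zero := FF.hmul_zero
  mul_comm := FF.hmul_comm

lemma mul_def (x y : FF) : x * y = ⟨x.re*y.re - x.im*y.im, x.re*y.im + x.im*y.re⟩ := rfl
lemma add_def (x y : FF) : x + y = ⟨x.re + y.re, x.im + y.im⟩ := rfl

/-- the nonzero squares of GF(9), concretely -/
def sq (a : FF) : Prop :=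
  a = ⟨1,0⟩ ∨ a = ⟨2,0⟩ ∨ a = ⟨0,1⟩ ∨ a = ⟨0,2⟩

instance : DecidablePred sq := fun a => by unfold sq; infer_instance

lemma sq_iff (a : FF) : (a ≠ 0 ∧ ∃ b : FF, b^2 = a) ↔ sq a := by
  revert a; decide

end FF

open FF in
/-- triangle-freeness of a triple, one ordering -/
def tri (x y z : FF) : Prop :=
  ¬(sq (x-y) ∧ sq (y-z) ∧ sq (x-z)) ∧ ¬(¬sq (x-y) ∧ ¬sq (y-z) ∧ ¬sq (x-z))

open FF in
/-- triangle-freeness of a triple, all orderings -/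
def tri3 (u v w : FF) : Prop :=
  ∀ a ∈ [u,v,w], ∀ b ∈ [u,v,w], ∀ c ∈ [u,v,w], a ≠ b → a ≠ c → b ≠ c →
    ¬(sq (a-b) ∧ sq (b-c) ∧ sq (a-c)) ∧ ¬(¬sq (a-b) ∧ ¬sq (b-c) ∧ ¬sq (a-c))

instance (x y z : FF) : Decidable (tri x y z) := by unfold tri; infer_instance
instance (x y z : FF) : Decidable (tri3 x y z) := by unfold tri3; infer_instance

open FF in
def Q (e1 e2 : Bool) (b x y z u v w : FF) : Prop :=
  u ≠ v ∧ u ≠ w ∧ v ≠ w ∧ tri3 u v w ∧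
    ∀ t ∈ [u,v,w], (t ≠ b ∧ (sq (t - b) ↔ e2 = true)) ∧
      ∃ s ∈ [x,y,z], t ≠ s ∧ (sq (t - s) ↔ e1 = true)

noncomputable instance (e1 e2 : Bool) (b x y z u v w : FF) :
    Decidable (Q e1 e2 b x y z u v w) := by
  unfold Q; infer_instance

def cand0 (e : Bool) : List (FF × FF × FF) :=
  if e then [(⟨1,0⟩,⟨2,0⟩,⟨0,1⟩),(⟨1,0⟩,⟨2,0⟩,⟨0,2⟩),(⟨1,0⟩,⟨0,1⟩,⟨0,2⟩),(⟨2,0⟩,⟨0,1⟩,⟨0,2⟩)]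
  else [(⟨1,1⟩,⟨1,2⟩,⟨2,1⟩),(⟨1,1⟩,⟨1,2⟩,⟨2,2⟩),(⟨1,1⟩,⟨2,1⟩,⟨2,2⟩),(⟨1,2⟩,⟨2,1⟩,⟨2,2⟩)]

def P0 (e1 e2 : Bool) (x y z : FF) : Prop :=
  x ≠ y → x ≠ z → y ≠ z → tri x y z →
  ∃ t ∈ cand0 e2, Q e1 e2 0 x y z t.1 t.2.1 t.2.2

noncomputable instance (e1 e2 : Bool) (x y z : FF) : Decidable (P0 e1 e2 x y z) := by
  unfold P0; infer_instance

set_option maxHeartbeats 16000000 in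
lemma core0 : ∀ (e1 e2 : Bool) (x y z : FF), P0 e1 e2 x y z := by decide

lemma mem3_shift {a b u v w : FF} (h : a ∈ [u+b, v+b, w+b]) : a - b ∈ [u,v,w] := by
  rcases (by simpa using h : a = u + b ∨ a = v + b ∨ a = w + b) with rfl|rfl|rfl <;> simp

lemma tri3_shift {u v w : FF} (b : FF) (h : tri3 u v w) : tri3 (u+b) (v+b) (w+b) := by
  intro a ha c hc d hd hac had hcd
  have := h (a-b) (mem3_shift ha) (c-b) (mem3_shift hc) (d-b) (mem3_shift hd)
    (fun h2 => hac (sub_left_inj.mp h2)) (fun h2 => had (sub_left_inj.mp h2))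
    (fun h2 => hcd (sub_left_inj.mp h2))
  simpa [sub_sub_sub_cancel_right] using this

lemma Q_shift {e1 e2 : Bool} {b x y z u v w : FF}
    (h : Q e1 e2 0 (x-b) (y-b) (z-b) u v w) : Q e1 e2 b x y z (u+b) (v+b) (w+b) := by
  obtain ⟨h1, h2, h3, h4, h5⟩ := h
  refine ⟨fun h' => h1 (add_left_inj _ |>.mp h'), fun h' => h2 (add_left_inj _ |>.mp h'),
    fun h' => h3 (add_left_inj _ |>.mp h'), tri3_shift b h4, ?_⟩
  intro t ht
  obtain ⟨⟨hne, hsq⟩, s, hs, hts, hsq2⟩ := h5 (t - b) (mem3_shift ht)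
  refine ⟨⟨sub_ne_zero.mp (by simpa using hne), by simpa using hsq⟩, s + b, ?_, ?_, ?_⟩
  · rcases (by simpa using hs : s = x - b ∨ s = y - b ∨ s = z - b) with rfl|rfl|rfl <;> simp
  · intro h'
    exact hts (by rw [h']; ring)
  · have : t - (s + b) = t - b - s := by ring
    rwa [this]

lemma core (e1 e2 : Bool) (b x y z : FF) (hxy : x ≠ y) (hxz : x ≠ z) (hyz : y ≠ z)
    (htri : tri x y z) : ∃ u v w : FF, Q e1 e2 b x y z u v w := by
  have htri' : tri (x-b) (y-b) (z-b) := by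
    unfold tri at htri ⊢
    simpa [sub_sub_sub_cancel_right] using htri
  obtain ⟨t, _, hQ⟩ := core0 e1 e2 (x-b) (y-b) (z-b)
    (fun h => hxy (sub_left_inj.mp h)) (fun h => hxz (sub_left_inj.mp h))
    (fun h => hyz (sub_left_inj.mp h)) htri'
  exact ⟨t.1 + b, t.2.1 + b, t.2.2 + b, Q_shift (by simpa using hQ)⟩

/-! ### The isomorphism between `F9` and `FF` -/

def iZ : ZMod 3 →+* FF where
  toFun a := ⟨a, 0⟩
  map_one' := rfl
  map_mul' a b := by
    simp only [FF.mul_def]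
    congr 1 <;> ring
  map_zero' := rfl
  map_add' a b := by
    simp only [FF.add_def]
    congr 1

lemma root_cond : Polynomial.eval₂ iZ (⟨0,1⟩ : FF) (X ^ 2 + 1 : (ZMod 3)[X]) = 0 := by
  simp only [Polynomial.eval₂_add, Polynomial.eval₂_pow, Polynomial.eval₂_X,
    Polynomial.eval₂_one]
  decide

noncomputable def phi : F9 →+* FF := AdjoinRoot.lift iZ ⟨0,1⟩ root_cond

lemma phi_surj : Function.Surjective phi := by
  intro a
  refine ⟨AdjoinRoot.of _ a.re + AdjoinRoot.of _ a.im * ξ, ?_⟩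
  rw [map_add, map_mul]
  unfold phi ξ
  rw [AdjoinRoot.lift_of, AdjoinRoot.lift_of, AdjoinRoot.lift_root]
  show iZ a.re + iZ a.im * ⟨0,1⟩ = a
  simp only [iZ, RingHom.coe_mk, MonoidHom.coe_mk, OneHom.coe_mk, FF.mul_def, FF.add_def]
  simp

lemma monic_f : (X ^ 2 + 1 : (ZMod 3)[X]).Monic :=
  Polynomial.monic_X_pow_add (Polynomial.degree_one_le.trans_lt (by norm_num))

noncomputable def pbF9 : PowerBasis (ZMod 3) F9 := AdjoinRoot.powerBasis' monic_f

noncomputable instance : Fintype F9 :=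
  Fintype.ofEquiv _ pbF9.basis.equivFun.toEquiv.symm

lemma card_F9 : Fintype.card F9 = 9 := by
  rw [Fintype.card_congr pbF9.basis.equivFun.toEquiv]
  have hdim : pbF9.dim = 2 := by
    show (X ^ 2 + 1 : (ZMod 3)[X]).natDegree = 2
    have : (X ^ 2 + 1 : (ZMod 3)[X]) = X ^ 2 + Polynomial.C 1 := by rw [map_one]
    rw [this, Polynomial.natDegree_X_pow_add_C]
  rw [Fintype.card_fun]
  rw [hdim]
  rfl

lemma phi_bij : Function.Bijective phi := by
  rw [Fintype.bijective_iff_surjective_and_card]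
  refine ⟨phi_surj, ?_⟩
  rw [card_F9]
  rfl

noncomputable def eq9 : F9 ≃+* FF := RingEquiv.ofBijective phi phi_bij

lemma Sq_iff (a : F9) : Sq a ↔ FF.sq (eq9 a) := by
  rw [← FF.sq_iff]
  unfold Sq
  constructor
  · rintro ⟨h0, b, rfl⟩
    exact ⟨fun h => h0 (by simpa using eq9.injective (by simpa using h)),
      eq9 b, by rw [← map_pow]⟩
  · rintro ⟨h0, b, hb⟩
    refine ⟨fun h => h0 (by rw [h, map_zero]), eq9.symm b, ?_⟩
    apply eq9.injective
    rw [map_pow]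
    simpa using hb

lemma nb_iff (ε : Bool) (u v : F9) : u ∈ Nb ε v ↔ (u ≠ v ∧ (Sq (u - v) ↔ ε = true)) := by
  cases ε <;> simp [Nb]

/-- Lemma 6: for any signs ε₁, ε₂, every 3-element triangle-free set S₁ and
color b yield a 3-element triangle-free set S₂ every member s₂ of which is an
ε₂-neighbor of b and an ε₁-neighbor of some s₁ ∈ S₁. -/
theorem key_lemma (ε₁ ε₂ : Bool) (S₁ : Set F9)
    (hcard : S₁.ncard = 3) (htf : TriFree S₁) (b : F9) :
    ∃ S₂ : Set F9, S₂.ncard = 3 ∧ TriFree S₂ ∧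
      ∀ s₂ ∈ S₂, s₂ ∈ Nb ε₂ b ∧ ∃ s₁ ∈ S₁, s₂ ∈ Nb ε₁ s₁ := by
  obtain ⟨p1, p2, p3, h12, h13, h23, rfl⟩ := Set.ncard_eq_three.mp hcard
  have hxy : eq9 p1 ≠ eq9 p2 := fun h => h12 (eq9.injective h)
  have hxz : eq9 p1 ≠ eq9 p3 := fun h => h13 (eq9.injective h)
  have hyz : eq9 p2 ≠ eq9 p3 := fun h => h23 (eq9.injective h)
  have htri : tri (eq9 p1) (eq9 p2) (eq9 p3) := by
    constructor
    · rintro ⟨q1, q2, q3⟩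
      exact htf.1 ⟨p1, p2, p3, by simp, by simp, by simp, h12, h13, h23,
        (Sq_iff _).mpr (by rwa [map_sub]), (Sq_iff _).mpr (by rwa [map_sub]),
        (Sq_iff _).mpr (by rwa [map_sub])⟩
    · rintro ⟨q1, q2, q3⟩
      refine htf.2 ⟨p1, p2, p3, by simp, by simp, by simp, h12, h13, h23,
        ?_, ?_, ?_⟩ <;> intro hS <;>
        [exact q1 (by rw [← map_sub]; exact (Sq_iff _).mp hS);
         exact q2 (by rw [← map_sub]; exact (Sq_iff _).mp hS);
         exact q3 (by rw [← map_sub]; exact (Sq_iff _).mp hS)]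
  obtain ⟨u, v, w, hQ⟩ := core ε₁ ε₂ (eq9 b) (eq9 p1) (eq9 p2) (eq9 p3) hxy hxz hyz htri
  unfold Q at hQ
  obtain ⟨huv, huw, hvw, htri3, hcond⟩ := hQ
  refine ⟨{eq9.symm u, eq9.symm v, eq9.symm w}, ?_, ?_, ?_⟩
  · exact Set.ncard_eq_three.mpr ⟨_, _, _, fun h => huv (by simpa using congrArg eq9 h),
      fun h => huw (by simpa using congrArg eq9 h),
      fun h => hvw (by simpa using congrArg eq9 h), rfl⟩
  · have hmem : ∀ a ∈ ({eq9.symm u, eq9.symm v, eq9.symm w} : Set F9),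
        eq9 a ∈ [u, v, w] := by
      rintro a (rfl | rfl | rfl) <;> simp
    constructor
    · rintro ⟨a, c, d, ha, hc, hd, hac, had, hcd, q1, q2, q3⟩
      refine (htri3 (eq9 a) (hmem a ha) (eq9 c) (hmem c hc) (eq9 d) (hmem d hd)
        (fun h => hac (eq9.injective h)) (fun h => had (eq9.injective h))
        (fun h => hcd (eq9.injective h))).1 ⟨?_, ?_, ?_⟩ <;> rw [← map_sub]
      exacts [(Sq_iff _).mp q1, (Sq_iff _).mp q2, (Sq_iff _).mp q3]
    · rintro ⟨a, c, d, ha, hc, hd, hac, had, hcd, q1, q2, q3⟩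
      refine (htri3 (eq9 a) (hmem a ha) (eq9 c) (hmem c hc) (eq9 d) (hmem d hd)
        (fun h => hac (eq9.injective h)) (fun h => had (eq9.injective h))
        (fun h => hcd (eq9.injective h))).2 ⟨?_, ?_, ?_⟩ <;> rw [← map_sub] <;>
        intro hS <;>
        [exact q1 ((Sq_iff _).mpr hS); exact q2 ((Sq_iff _).mpr hS);
         exact q3 ((Sq_iff _).mpr hS)]
  · intro s₂ hs₂
    have h9 : eq9 s₂ ∈ [u, v, w] := by
      rcases hs₂ with rfl | rfl | rfl <;> simp
    obtain ⟨⟨hne, hsq⟩, s, hs, hts, hsq2⟩ := hcond (eq9 s₂) h9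
    constructor
    · rw [nb_iff]
      exact ⟨fun h => hne (by rw [h]), by rw [Sq_iff, map_sub]; exact hsq⟩
    · refine ⟨eq9.symm s, ?_, ?_⟩
      · rcases (by simpa using hs : s = eq9 p1 ∨ s = eq9 p2 ∨ s = eq9 p3) with
          rfl | rfl | rfl <;> simp
      · rw [nb_iff]
        refine ⟨fun h => hts (by rw [h]; simp), ?_⟩
        rw [Sq_iff, map_sub]
        simpa using hsq2
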